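/- Let G be cyclic of order n with generator g, P_* the standard periodic resolution, and Δ the Cartan–Eilenberg diagonal approximation. Define H: P_* → (P_* ⊗ P_* ⊗ P_*)_* of degree +1 with component into P_a ⊗ P_b ⊗ P_c given on e_{a+b+c-1} by Σ_{0 ≤ i < j < k < n} g^i e_a ⊗ g^j e_b ⊗ g^k e_c when a, b, c are all odd, and 0 otherwise. Then dH + Hd = (Δ ⊗ 1)Δ − (1 ⊗ Δ)Δ, i.e. H is a chain homotopy witnessing the coassociativity of Δ up to homotopy. -/

import Mathlib

open Finset TensorProduct

noncomputable section

variable (p n : ℕ) (G : Type) [CommGroup G] (g : G)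

/-- The group algebra `F_p[G]`; each term `P_i` of the standard periodic resolution of a
cyclic group is free of rank one over it, on the generator `e_i`. -/
abbrev GA : Type := MonoidAlgebra (ZMod p) G

/-- `g` as an element of the group algebra. -/
def ofg : GA p G := MonoidAlgebra.of (ZMod p) G g

/-- The norm element `N = 1 + g + ⋯ + g^(n-1)`. -/
def normElt : GA p G := ∑ k ∈ Finset.range n, (ofg p G g) ^ k

/-- The coefficient of the differential `d(e_i) = coef i • e_(i-1)` of the periodic
resolution: `g - 1` for `i` odd, `N` for `i` even. -/
def coefD (i : ℕ) : GA p G := if Odd i then ofg p G g - 1 else normElt p n G g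

/-- The augmentation `F_p[G] → F_p`. -/
def augGA : GA p G →ₐ[ZMod p] ZMod p := (MonoidAlgebra.lift (ZMod p) (ZMod p) G) 1

/-- The coefficient of the Cartan–Eilenberg diagonal approximation:
`Δ(e_(a+b)) = Δel a b • (e_a ⊗ e_b)` (diagonal `G`-action on the right). -/
def Δel (a b : ℕ) : GA p G ⊗[ZMod p] GA p G :=
  if Even a then 1 ⊗ₜ 1
  else if Even b then 1 ⊗ₜ ofg p G g
  else ∑ j ∈ Finset.range n, ∑ i ∈ Finset.range j, ((ofg p G g) ^ i) ⊗ₜ ((ofg p G g) ^ j)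

/-- The comultiplication `F_p[G] → F_p[G] ⊗ F_p[G]`, `h ↦ h ⊗ h`, encoding the diagonal
action of the group algebra on a tensor product. -/
def comul2 : GA p G →ₐ[ZMod p] GA p G ⊗[ZMod p] GA p G :=
  (MonoidAlgebra.lift (ZMod p) (GA p G ⊗[ZMod p] GA p G) G)
    { toFun := fun h => (MonoidAlgebra.of (ZMod p) G h) ⊗ₜ (MonoidAlgebra.of (ZMod p) G h)
      map_one' := by
        show _ ⊗ₜ _ = _
        rw [map_one]
        rfl
      map_mul' := by
        intro x y
        show _ ⊗ₜ _ = _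
        simp only [map_mul, Algebra.TensorProduct.tmul_mul_tmul] }

/-- The component `P_(a+b) → P_a ⊗ P_b` of the diagonal approximation, as the
`G`-equivariant map sending `e_(a+b)` to `Δel a b • (e_a ⊗ e_b)`. -/
def Δmap (a b : ℕ) : GA p G →ₗ[ZMod p] GA p G ⊗[ZMod p] GA p G :=
  (LinearMap.mulRight (ZMod p) (Δel p n G g a b)).comp (comul2 p G).toLinearMap

/-- Triple tensors. -/
abbrev GA3 : Type := GA p G ⊗[ZMod p] (GA p G ⊗[ZMod p] GA p G)

def comul3 : GA p G →ₐ[ZMod p] GA3 p G :=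
  (MonoidAlgebra.lift (ZMod p) (GA3 p G) G)
    { toFun := fun h => (MonoidAlgebra.of (ZMod p) G h) ⊗ₜ
        ((MonoidAlgebra.of (ZMod p) G h) ⊗ₜ (MonoidAlgebra.of (ZMod p) G h))
      map_one' := by
        show _ ⊗ₜ _ = _
        rw [map_one]
        rfl
      map_mul' := by
        intro x y
        show _ ⊗ₜ _ = _
        simp only [map_mul, Algebra.TensorProduct.tmul_mul_tmul] }

/-- The coefficient of Steenrod-style homotopy `H`:
`H(e_(a+b+c-1))`'s component in `P_a ⊗ P_b ⊗ P_c` is `Hel a b c • (e_a ⊗ e_b ⊗ e_c)`. -/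
def Hel (a b c : ℕ) : GA3 p G :=
  if Odd a ∧ Odd b ∧ Odd c then
    ∑ k ∈ Finset.range n, ∑ j ∈ Finset.range k, ∑ i ∈ Finset.range j,
      ((ofg p G g) ^ i) ⊗ₜ (((ofg p G g) ^ j) ⊗ₜ ((ofg p G g) ^ k))
  else 0

/-- Component of `(Δ ⊗ 1)Δ − (1 ⊗ Δ)Δ` at `P_a ⊗ P_b ⊗ P_c`, evaluated on `e_(a+b+c)`. -/
def coassocDefect (a b c : ℕ) : GA3 p G :=
  (TensorProduct.assoc (ZMod p) (GA p G) (GA p G) (GA p G))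
      (TensorProduct.map (Δmap p n G g a b) LinearMap.id (Δel p n G g (a + b) c))
    - TensorProduct.map LinearMap.id (Δmap p n G g b c) (Δel p n G g a (b + c))

end

/-
Write `x, y, z` for `g` acting on the three tensor factors. Every component of `Δ`, of `H` and
of the differentials is multiplication by a polynomial in `x, y, z`: `Δ` contributes
`P(u, v) = Σ_{i<j<n} uⁱ vʲ` and `H` contributes `T = Σ_{i<j<k<n} xⁱ yʲ zᵏ`. Since `H` vanishes
unless `a, b, c` are all odd, the differential next to it is always `g - 1`, never the norm
element, and each parity case of the claim becomes one of the telescoping identities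
`(x - 1) T = P(xy, z) - P(y, z)`, `(y - 1) T = P(x, yz) - y P(xy, z)`,
`(z - 1) T = zⁿ P(x, y) - z P(x, yz)` (each by induction on `n`), or their combination for
`xyz - 1`, together with `zⁿ = 1`.
-/

section CoefficientRing
variable {R : Type*} [CommRing R] (n : ℕ)

def pairSum (x y : R) : R := ∑ j ∈ range n, ∑ i ∈ range j, x ^ i * y ^ j

def tripleSum (x y z : R) : R :=
  ∑ k ∈ range n, ∑ j ∈ range k, ∑ i ∈ range j, x ^ i * y ^ j * z ^ k

def diagCoeff (a b : ℕ) (u v : R) : R :=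
  if Even a then 1 else if Even b then v else pairSum n u v

def homotopyCoeff (a b c : ℕ) (x y z : R) : R :=
  if Odd a ∧ Odd b ∧ Odd c then tripleSum n x y z else 0

variable {n}

lemma map_pairSum {S F : Type*} [CommRing S] [FunLike F R S] [RingHomClass F R S] (f : F)
    (x y : R) :
    f (pairSum n x y) = pairSum n (f x) (f y) := by
  simp [pairSum]

lemma map_diagCoeff {S F : Type*} [CommRing S] [FunLike F R S] [RingHomClass F R S] (f : F)
    (a b : ℕ) (u v : R) :
    f (diagCoeff n a b u v) = diagCoeff n a b (f u) (f v) := by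
  unfold diagCoeff; split_ifs <;> simp [map_pairSum]

lemma mul_homotopyCoeff_of_odd {a b c : ℕ} {x y z r s : R}
    (h : Odd a ∧ Odd b ∧ Odd c → r = s) :
    r * homotopyCoeff n a b c x y z = s * homotopyCoeff n a b c x y z := by
  unfold homotopyCoeff
  split_ifs with hodd <;> simp [h, hodd]

variable (x y z : R)

lemma pairSum_succ : pairSum (n + 1) x y = pairSum n x y + (∑ i ∈ range n, x ^ i) * y ^ n := by
  rw [pairSum, sum_range_succ, sum_mul]; rfl

lemma tripleSum_succ : tripleSum (n + 1) x y z = tripleSum n x y z + pairSum n x y * z ^ n := by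
  simp only [tripleSum, pairSum, sum_range_succ _ n, sum_mul]

lemma sub_one_mul_pairSum_left :
    (x - 1) * pairSum n x y = ∑ i ∈ range n, (x * y) ^ i - ∑ i ∈ range n, y ^ i := by
  induction n with
  | zero => simp [pairSum]
  | succ n ih =>
    rw [pairSum_succ, mul_add, ih, ← mul_assoc, mul_geom_sum, sum_range_succ, sum_range_succ]
    ring

lemma sub_one_mul_pairSum_right :
    (y - 1) * pairSum n x y
      = y ^ n * ∑ i ∈ range n, x ^ i - y * ∑ i ∈ range n, (x * y) ^ i := by
  induction n with
  | zero => simp [pairSum]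
  | succ n ih =>
    rw [pairSum_succ, mul_add, ih, sum_range_succ, sum_range_succ]
    ring

lemma sub_one_mul_tripleSum_left :
    (x - 1) * tripleSum n x y z = pairSum n (x * y) z - pairSum n y z := by
  induction n with
  | zero => simp [tripleSum, pairSum]
  | succ n ih =>
    rw [tripleSum_succ, mul_add, ih, ← mul_assoc, sub_one_mul_pairSum_left, pairSum_succ,
      pairSum_succ]
    ring

lemma sub_one_mul_tripleSum_middle :
    (y - 1) * tripleSum n x y z = pairSum n x (y * z) - y * pairSum n (x * y) z := by
  induction n with
  | zero => simp [tripleSum, pairSum]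
  | succ n ih =>
    rw [tripleSum_succ, mul_add, ih, ← mul_assoc, sub_one_mul_pairSum_right, pairSum_succ,
      pairSum_succ]
    ring

lemma sub_one_mul_tripleSum_right :
    (z - 1) * tripleSum n x y z = z ^ n * pairSum n x y - z * pairSum n x (y * z) := by
  induction n with
  | zero => simp [tripleSum, pairSum]
  | succ n ih =>
    rw [tripleSum_succ, mul_add, ih, pairSum_succ, pairSum_succ]
    ring

lemma mul_sub_one_mul_tripleSum :
    (x * y * z - 1) * tripleSum n x y z = z ^ n * pairSum n x y - y * z * pairSum n y z := by
  linear_combination y * z * sub_one_mul_tripleSum_left x y z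
    + z * sub_one_mul_tripleSum_middle x y z + sub_one_mul_tripleSum_right x y z

lemma boundary_homotopyCoeff {K : Type*} [Ring K] [Module K R] (hz : z ^ n = 1) (a b c : ℕ) :
    (x - 1) * homotopyCoeff n (a + 1) b c x y z
      + (-1 : K) ^ a • ((y - 1) * homotopyCoeff n a (b + 1) c x y z)
      + (-1 : K) ^ (a + b) • ((z - 1) * homotopyCoeff n a b (c + 1) x y z)
      + (x * y * z - 1) * homotopyCoeff n a b c x y z
      = diagCoeff n (a + b) c (x * y) z * diagCoeff n a b x y
        - diagCoeff n a (b + c) x (y * z) * diagCoeff n b c y z := by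
  rcases em (Even a) with ha | ha <;> rcases em (Even b) with hb | hb <;>
    rcases em (Even c) with hc | hc <;>
    simp [homotopyCoeff, diagCoeff, ← Nat.not_even_iff_odd, Nat.even_add, ha, hb, hc]
  -- the parities of (a, b, c) left are eoo, oee, oeo, ooe, ooo
  · exact sub_one_mul_tripleSum_left x y z
  · ring
  · linear_combination -sub_one_mul_tripleSum_middle x y z
  · linear_combination sub_one_mul_tripleSum_right x y z + pairSum n x y * hz
  · linear_combination mul_sub_one_mul_tripleSum x y z + pairSum n x y * hz

end CoefficientRing

section TensorAlgebra
variable {R A B C : Type*} [CommSemiring R] [Semiring A] [Semiring B] [Semiring C]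
  [Algebra R A] [Algebra R B] [Algebra R C]

lemma TensorProduct.map_mulRight_comp_id_apply (f : A →ₐ[R] B) (e : B) (w : A ⊗[R] C) :
    TensorProduct.map ((LinearMap.mulRight R e).comp f.toLinearMap) LinearMap.id w
      = Algebra.TensorProduct.map f (AlgHom.id R C) w * (e ⊗ₜ 1) := by
  induction w using TensorProduct.induction_on with
  | zero => simp
  | tmul a c => simp
  | add w w' hw hw' => simp [hw, hw', add_mul]

lemma TensorProduct.map_id_mulRight_comp_apply (f : B →ₐ[R] C) (e : C) (w : A ⊗[R] B) :
    TensorProduct.map LinearMap.id ((LinearMap.mulRight R e).comp f.toLinearMap) w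
      = Algebra.TensorProduct.map (AlgHom.id R A) f w * (1 ⊗ₜ e) := by
  induction w using TensorProduct.induction_on with
  | zero => simp
  | tmul a c => simp
  | add w w' hw hw' => simp [hw, hw', add_mul]

lemma TensorProduct.map_mulLeft_id (r : A) :
    TensorProduct.map (LinearMap.mulLeft R r) (LinearMap.id : B →ₗ[R] B)
      = LinearMap.mulLeft R (r ⊗ₜ 1) := by
  rw [LinearMap.mulLeft_tmul, LinearMap.mulLeft_one]

lemma TensorProduct.map_id_mulLeft (r : B) :
    TensorProduct.map (LinearMap.id : A →ₗ[R] A) (LinearMap.mulLeft R r)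
      = LinearMap.mulLeft R (1 ⊗ₜ r) := by
  rw [LinearMap.mulLeft_tmul, LinearMap.mulLeft_one]

end TensorAlgebra

section CyclicResolution
variable (p n : ℕ) (G : Type) [CommGroup G] (g : G)

noncomputable def ofg₁ : GA3 p G := ofg p G g ⊗ₜ 1
noncomputable def ofg₂ : GA3 p G := 1 ⊗ₜ (ofg p G g ⊗ₜ 1)
noncomputable def ofg₃ : GA3 p G := 1 ⊗ₜ (1 ⊗ₜ ofg p G g)

lemma Hel_eq (a b c : ℕ) :
    Hel p n G g a b c = homotopyCoeff n a b c (ofg₁ p G g) (ofg₂ p G g) (ofg₃ p G g) := by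
  unfold Hel homotopyCoeff tripleSum
  simp [ofg₁, ofg₂, ofg₃, Algebra.TensorProduct.tmul_pow]

lemma Δel_eq (a b : ℕ) :
    Δel p n G g a b = diagCoeff n a b (ofg p G g ⊗ₜ 1) (1 ⊗ₜ ofg p G g) := by
  unfold Δel diagCoeff pairSum
  simp [Algebra.TensorProduct.tmul_pow, Algebra.TensorProduct.one_def]

lemma comul2_ofg : comul2 p G (ofg p G g) = ofg p G g ⊗ₜ ofg p G g := by
  simp [comul2, ofg]

lemma comul3_ofg : comul3 p G (ofg p G g) = ofg₁ p G g * ofg₂ p G g * ofg₃ p G g := by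
  simp [comul3, ofg, ofg₁, ofg₂, ofg₃]

lemma coassocDefect_eq (a b c : ℕ) :
    coassocDefect p n G g a b c
      = diagCoeff n (a + b) c (ofg₁ p G g * ofg₂ p G g) (ofg₃ p G g)
          * diagCoeff n a b (ofg₁ p G g) (ofg₂ p G g)
        - diagCoeff n a (b + c) (ofg₁ p G g) (ofg₂ p G g * ofg₃ p G g)
          * diagCoeff n b c (ofg₂ p G g) (ofg₃ p G g) := by
  rw [coassocDefect, Δmap, Δmap, TensorProduct.map_mulRight_comp_id_apply,
    TensorProduct.map_id_mulRight_comp_apply]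
  change Algebra.TensorProduct.assoc (ZMod p) (ZMod p) (ZMod p) (GA p G) (GA p G) (GA p G) (_ * _)
    - _ = _
  rw [map_mul, ← Algebra.TensorProduct.includeLeft_apply (S := ZMod p) (Δel p n G g a b),
    ← Algebra.TensorProduct.includeRight_apply (Δel p n G g b c)]
  simp only [Δel_eq, map_diagCoeff]
  have hone : (1 : GA p G ⊗[ZMod p] GA p G) = 1 ⊗ₜ 1 := Algebra.TensorProduct.one_def
  congr 3 <;> simp [comul2_ofg, ofg₁, ofg₂, ofg₃, hone]

lemma coefD_of_odd {i : ℕ} (h : Odd i) : coefD p n G g i = ofg p G g - 1 := if_pos h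

lemma coefD_tmul_one_of_odd {i : ℕ} (h : Odd i) :
    coefD p n G g i ⊗ₜ[ZMod p] (1 : GA p G ⊗[ZMod p] GA p G) = ofg₁ p G g - 1 := by
  simp only [coefD_of_odd p n G g h, sub_tmul, ofg₁, ← Algebra.TensorProduct.one_def]

lemma one_tmul_coefD_tmul_one_of_odd {i : ℕ} (h : Odd i) :
    (1 : GA p G) ⊗ₜ[ZMod p] (coefD p n G g i ⊗ₜ[ZMod p] (1 : GA p G))
      = ofg₂ p G g - 1 := by
  simp only [coefD_of_odd p n G g h, sub_tmul, tmul_sub, ofg₂, ← Algebra.TensorProduct.one_def]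

lemma one_tmul_one_tmul_coefD_of_odd {i : ℕ} (h : Odd i) :
    (1 : GA p G) ⊗ₜ[ZMod p] ((1 : GA p G) ⊗ₜ[ZMod p] coefD p n G g i)
      = ofg₃ p G g - 1 := by
  simp only [coefD_of_odd p n G g h, tmul_sub, ofg₃, ← Algebra.TensorProduct.one_def]

lemma comul3_coefD_of_odd {i : ℕ} (h : Odd i) :
    comul3 p G (coefD p n G g i) = ofg₁ p G g * ofg₂ p G g * ofg₃ p G g - 1 := by
  rw [coefD_of_odd p n G g h, ← AlgHom.coe_toRingHom, map_sub, map_one, AlgHom.coe_toRingHom,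
    comul3_ofg]

lemma ofg₃_pow_orderOf : ofg₃ p G g ^ orderOf g = 1 := by
  simp only [ofg₃, ofg, Algebra.TensorProduct.tmul_pow, ← map_pow, pow_orderOf_eq_one, map_one,
    one_pow, ← Algebra.TensorProduct.one_def]

end CyclicResolution

theorem stmt4_general (p n : ℕ) (G : Type) [CommGroup G] (g : G)
    (hord : orderOf g = n) :
    ∀ a b c : ℕ,
      -- dH
      TensorProduct.map (LinearMap.mulLeft (ZMod p) (coefD p n G g (a + 1))) LinearMap.id
          (Hel p n G g (a + 1) b c)
        + ((-1 : ZMod p) ^ a) •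
            TensorProduct.map LinearMap.id
              (TensorProduct.map (LinearMap.mulLeft (ZMod p) (coefD p n G g (b + 1)))
                LinearMap.id)
              (Hel p n G g a (b + 1) c)
        + ((-1 : ZMod p) ^ (a + b)) •
            TensorProduct.map LinearMap.id
              (TensorProduct.map LinearMap.id
                (LinearMap.mulLeft (ZMod p) (coefD p n G g (c + 1))))
              (Hel p n G g a b (c + 1))
        -- + Hd
        + comul3 p G (coefD p n G g (a + b + c)) * Hel p n G g a b c
      -- = (Δ⊗1)Δ − (1⊗Δ)Δ
      = coassocDefect p n G g a b c := by
  intro a b c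
  subst hord
  simp only [TensorProduct.map_mulLeft_id, TensorProduct.map_id_mulLeft, LinearMap.mulLeft_apply,
    Hel_eq, coassocDefect_eq]
  rw [mul_homotopyCoeff_of_odd fun h => coefD_tmul_one_of_odd p _ G g h.1,
    mul_homotopyCoeff_of_odd fun h => one_tmul_coefD_tmul_one_of_odd p _ G g h.2.1,
    mul_homotopyCoeff_of_odd fun h => one_tmul_one_tmul_coefD_of_odd p _ G g h.2.2,
    mul_homotopyCoeff_of_odd fun h =>
      comul3_coefD_of_odd p _ G g ((h.1.add_odd h.2.1).add_odd h.2.2)]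
  exact boundary_homotopyCoeff (ofg₁ p G g) (ofg₂ p G g) (ofg₃ p G g)
    (ofg₃_pow_orderOf p G g) a b c

/-- Let `G` be cyclic of order `n` with generator `g`, `P_*` the
standard periodic resolution, and `Δ` the Cartan–Eilenberg diagonal approximation.
Define `H : P_* → (P_* ⊗ P_* ⊗ P_*)_*` of degree `+1`, whose component into
`P_a ⊗ P_b ⊗ P_c` on `e_(a+b+c-1)` is `Σ_{0 ≤ i < j < k < n} gⁱe_a ⊗ gʲe_b ⊗ gᵏe_c`
when `a, b, c` are all odd, and `0` otherwise.  Then `dH + Hd = (Δ⊗1)Δ − (1⊗Δ)Δ`.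
Identifying `P_i` with `F_p[G]`, this is the following componentwise identity at
`P_a ⊗ P_b ⊗ P_c`, evaluated on `e_(a+b+c)`, with the usual Koszul signs on the
differential of the triple tensor product and with `Hel a b c` the coefficient of the
component of `H(e_(a+b+c-1))` in `P_a ⊗ P_b ⊗ P_c`. -/
theorem stmt4 (p n : ℕ) (hp : p.Prime) (hn : 0 < n) (G : Type) [CommGroup G] (g : G)
    (hord : orderOf g = n) (hgen : ∀ x : G, x ∈ Subgroup.zpowers g) :
    ∀ a b c : ℕ,
      -- dH
      TensorProduct.map (LinearMap.mulLeft (ZMod p) (coefD p n G g (a + 1))) LinearMap.id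
          (Hel p n G g (a + 1) b c)
        + ((-1 : ZMod p) ^ a) •
            TensorProduct.map LinearMap.id
              (TensorProduct.map (LinearMap.mulLeft (ZMod p) (coefD p n G g (b + 1)))
                LinearMap.id)
              (Hel p n G g a (b + 1) c)
        + ((-1 : ZMod p) ^ (a + b)) •
            TensorProduct.map LinearMap.id
              (TensorProduct.map LinearMap.id
                (LinearMap.mulLeft (ZMod p) (coefD p n G g (c + 1))))
              (Hel p n G g a b (c + 1))
        -- + Hd
        + comul3 p G (coefD p n G g (a + b + c)) * Hel p n G g a b c
      -- = (Δ⊗1)Δ − (1⊗Δ)Δ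
      = coassocDefect p n G g a b c :=
  stmt4_general p n G g hord
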